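/- arXiv:2311.15428 — 2 statements merged into one kernel-verified Lean document; each statement's English description precedes it below -/
import Mathlib

section
/- Let J be a finite set, and let e_i, u_i ∈ ℝ, e : J → ℝ, u : J → ℝ, t : J → ℝ, and x : J → ℝ with x taking values in {0,1} and ∑_{j∈J} x(j) ≤ 1. Assume u_i ≥ e_i, and that for every j ∈ J with x(j) = 1 one has u(j) ≥ e(j) and u_i ≥ u(j) + t(j). Then u_i ≥ e_i + ∑_{j∈J} max{0, e(j) − e_i + t(j)}·x(j). -/
open Finset

/-- Validity of the serve-time lower-bound tightening inequality: if `u_i ≥ e_i`,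
at most one incoming arc is selected (`∑ x j ≤ 1`, `x` binary), and selecting arc
`(j,i)` implies `u j ≥ e j` and `u_i ≥ u j + t j`, then
`u_i ≥ e_i + ∑_j max{0, e j − e_i + t j} * x j`. -/
theorem stmt4 (J : Type*) [Fintype J] (ei ui : ℝ) (e u t x : J → ℝ)
    (hx01 : ∀ j, x j = 0 ∨ x j = 1) (hxsum : ∑ j, x j ≤ 1)
    (hui : ei ≤ ui)
    (harc : ∀ j, x j = 1 → e j ≤ u j ∧ u j + t j ≤ ui) :
    ei + ∑ j, max 0 (e j - ei + t j) * x j ≤ ui := by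
  classical
  by_cases h : ∃ j0, x j0 = 1
  · obtain ⟨j0, hj0⟩ := h
    have hzero : ∀ j, j ≠ j0 → x j = 0 := by
      intro j hj
      rcases hx01 j with h0 | h1
      · exact h0
      · exfalso
        have hsub : ∑ k ∈ ({j, j0} : Finset J), x k ≤ ∑ k, x k :=
          Finset.sum_le_sum_of_subset_of_nonneg (Finset.subset_univ _)
            (fun k _ _ => by rcases hx01 k with hk | hk <;> simp [hk])
        rw [Finset.sum_pair hj, h1, hj0] at hsub
        linarith
    have hsum : ∑ j, max 0 (e j - ei + t j) * x j = max 0 (e j0 - ei + t j0) := by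
      rw [Finset.sum_eq_single j0]
      · rw [hj0, mul_one]
      · intro j _ hj; rw [hzero j hj, mul_zero]
      · simp
    rw [hsum]
    obtain ⟨h1, h2⟩ := harc j0 hj0
    rcases le_total (e j0 - ei + t j0) 0 with h | h
    · rw [max_eq_left h]; linarith
    · rw [max_eq_right h]; linarith
  · push_neg at h
    have : ∀ j, x j = 0 := fun j => (hx01 j).resolve_right (h j)
    simp [this, hui]
end

section
/- Let J be a finite set, and let l_i, u_i ∈ ℝ, l : J → ℝ, u : J → ℝ, t : J → ℝ, and x : J → ℝ with x taking values in {0,1} and ∑_{j∈J} x(j) ≤ 1. Assume u_i ≤ l_i, and that for every j ∈ J with x(j) = 1 one has u(j) ≤ l(j) and u(j) ≥ u_i + t(j). Then u_i ≤ l_i − ∑_{j∈J} max{0, l_i − l(j) + t(j)}·x(j). -/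
open Finset

/-- Validity of the serve-time upper-bound tightening inequality: if `u_i ≤ l_i`,
at most one outgoing arc is selected (`∑ x j ≤ 1`, `x` binary), and selecting arc
`(i,j)` implies `u j ≤ l j` and `u j ≥ u_i + t j`, then
`u_i ≤ l_i − ∑_j max{0, l_i − l j + t j} * x j`. -/
theorem stmt5 (J : Type*) [Fintype J] (li ui : ℝ) (l u t x : J → ℝ)
    (hx01 : ∀ j, x j = 0 ∨ x j = 1) (hxsum : ∑ j, x j ≤ 1)
    (hui : ui ≤ li)
    (harc : ∀ j, x j = 1 → u j ≤ l j ∧ ui + t j ≤ u j) :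
    ui ≤ li - ∑ j, max 0 (li - l j + t j) * x j := by
  classical
  by_cases h : ∃ j0, x j0 = 1
  · obtain ⟨j0, hj0⟩ := h
    -- every other j has x j = 0
    have hothers : ∀ j, j ≠ j0 → x j = 0 := by
      intro j hj
      rcases hx01 j with h0 | h1
      · exact h0
      · exfalso
        have hle : x j0 + x j ≤ ∑ j, x j := by
          have := Finset.add_sum_erase Finset.univ x (Finset.mem_univ j0)
          rw [← this]
          have hjmem : j ∈ Finset.univ.erase j0 := Finset.mem_erase.mpr ⟨hj, Finset.mem_univ j⟩
          have := Finset.single_le_sum (f := x)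
            (fun i _ => by rcases hx01 i with h | h <;> simp [h]) hjmem
          linarith
        rw [hj0, h1] at hle
        linarith
    have hsum : ∑ j, max 0 (li - l j + t j) * x j = max 0 (li - l j0 + t j0) := by
      rw [Finset.sum_eq_single j0]
      · rw [hj0, mul_one]
      · intro j _ hj; rw [hothers j hj, mul_zero]
      · intro h; exact absurd (Finset.mem_univ j0) h
    rw [hsum]
    obtain ⟨h1, h2⟩ := harc j0 hj0
    rcases le_total (li - l j0 + t j0) 0 with hc | hc
    · rw [max_eq_left hc]; linarith
    · rw [max_eq_right hc]; linarith
  · have : ∀ j, x j = 0 := fun j => (hx01 j).resolve_right (fun h1 => h ⟨j, h1⟩)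
    simp [this]
    linarith
end
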